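/- Let p, q ∈ ℕ be primes with 2 < q < p and let a, b ∈ ℤ. (i) If b ≡ 0 (mod p), then [q]^{−a}([q][p])^{b}[p]^{−b} is the identity of S_p if and only if a ≡ 0 (mod q). (ii) If b ≡ 1 (mod p), then [q]^{−a}([q][p])^{b}[p]^{−b} is the identity of S_p if and only if a ≡ 1 (mod q). -/

import Mathlib

/-- The cyclic permutation `[n] = (1,2,…,n)` considered as an element of the symmetric
group `S_p` on the `p` points `{0,…,p-1}` (written 0-indexed): it maps `i ↦ i + 1` for
`i < n - 1`, maps `n - 1 ↦ 0` and fixes all points `n, …, p - 1`. -/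
def cyc (p n : ℕ) : Equiv.Perm (Fin p) :=
  if h : n - 1 < p then Fin.cycleRange ⟨n - 1, h⟩ else 1

/-!
The paper's `[q][p]`, i.e. `cyc p p * cyc p q`, sends `i ↦ i + 2` for `i < q - 1`, `q - 1 ↦ 1`
and `i ↦ i + 1 (mod p)` for `i ≥ q`: it is again a `p`-cycle, namely the conjugate of `[p]` by
the permutation doubling the first `q` points modulo `q` (a bijection since `q` is odd). So `[p]`
and `[q][p]` both have order `p`, and `([q][p])^b [p]^{-b}` only depends on `b` modulo `p`: it is
`1` for `b ≡ 0` and `[q]` for `b ≡ 1`. The element in question is therefore `[q]^{-a}` resp.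
`[q]^{1-a}`, and `[q]` has order `q`.
-/

open Equiv

lemma cyc_apply_val {p n : ℕ} (hnp : n ≤ p) (x : Fin p) :
    (cyc p n x : ℕ) =
      if (x : ℕ) < n - 1 then (x : ℕ) + 1 else if (x : ℕ) = n - 1 then 0 else x := by
  have hn : n - 1 < p := by have := x.isLt; omega
  rw [cyc, dif_pos hn]
  by_cases hx : (x : ℕ) ≤ n - 1
  · rw [Fin.coe_cycleRange_of_le (Fin.le_def.mpr hx)]
    simp only [Fin.ext_iff]
    split_ifs <;> omega
  · rw [Fin.cycleRange_of_gt (Fin.lt_def.mpr (by simpa using hx)), if_neg (by omega),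
      if_neg (by omega)]

lemma orderOf_cyc {p n : ℕ} (hn : 1 < n) (hnp : n ≤ p) : orderOf (cyc p n) = n := by
  obtain ⟨m, rfl⟩ : ∃ m, p = m + 1 := ⟨p - 1, by omega⟩
  have hn' : n - 1 < m + 1 := by omega
  have h0 : (⟨n - 1, hn'⟩ : Fin (m + 1)) ≠ 0 := by simp [Fin.ext_iff]; omega
  rw [cyc, dif_pos hn', ← Perm.lcm_cycleType, Fin.cycleType_cycleRange h0]
  simp only [Multiset.lcm_singleton, normalize_eq]
  omega

noncomputable def doubleMod {p q : ℕ} (hq : Odd q) (hqp : q ≤ p) : Perm (Fin p) :=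
  Equiv.ofBijective
    (fun x => if (x : ℕ) < q then ⟨2 * x % q, (Nat.mod_lt _ hq.pos).trans_le hqp⟩ else x) <|
    Finite.injective_iff_bijective.mp fun x y hxy => by
      split_ifs at hxy with hx hy hy <;> simp only [Fin.ext_iff] at hxy ⊢
      · have := Nat.ModEq.cancel_left_of_coprime hq.coprime_two_right.gcd_eq_one hxy
        rwa [Nat.ModEq, Nat.mod_eq_of_lt hx, Nat.mod_eq_of_lt hy] at this
      · have := Nat.mod_lt (2 * (x : ℕ)) hq.pos; omega
      · have := Nat.mod_lt (2 * (y : ℕ)) hq.pos; omega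
      · exact hxy

lemma doubleMod_apply_val {p q : ℕ} (hq : Odd q) (hqp : q ≤ p) (x : Fin p) :
    (doubleMod hq hqp x : ℕ) = if (x : ℕ) < q then 2 * x % q else x := by
  simp only [doubleMod, Equiv.ofBijective_apply]
  split_ifs <;> rfl

lemma two_mul_mod_cases {q v : ℕ} (hv : v < q) :
    2 * v % q = 2 * v ∧ 2 * v < q ∨ 2 * v % q = 2 * v - q ∧ q ≤ 2 * v := by
  rcases Nat.lt_or_ge (2 * v) q with h | h
  · exact Or.inl ⟨Nat.mod_eq_of_lt h, h⟩
  · exact Or.inr ⟨(Nat.mod_eq_sub_mod h).trans (Nat.mod_eq_of_lt (by omega)), h⟩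

lemma semiconjBy_doubleMod {p q : ℕ} (hq : Odd q) (hqp : q ≤ p) :
    SemiconjBy (doubleMod hq hqp) (cyc p p) (cyc p p * cyc p q) := by
  ext x
  simp only [Perm.mul_apply, cyc_apply_val hqp, cyc_apply_val le_rfl, doubleMod_apply_val]
  have hx := x.isLt
  have h0 : 2 * 0 % q = 0 := by simp
  obtain ⟨k, hk⟩ := hq
  by_cases hxq : (x : ℕ) < q
  · by_cases hxq' : (x : ℕ) + 1 < q
    · rcases two_mul_mod_cases hxq with h | h <;> rcases two_mul_mod_cases hxq' with h' | h' <;>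
        split_ifs <;> omega
    · rcases two_mul_mod_cases hxq with h | h <;> split_ifs <;> omega
  · split_ifs <;> omega

lemma orderOf_cyc_mul_cyc {p q : ℕ} (hq : Odd q) (hqp : q ≤ p) (hp : 1 < p) :
    orderOf (cyc p p * cyc p q) = p :=
  (semiconjBy_doubleMod hq hqp).orderOf_eq _ ▸ orderOf_cyc hp le_rfl

theorem cyc_identity_iff_modEq_general (p q : ℕ) (hq : q.Prime) (h2q : 2 < q)
    (hqp : q < p) (a b : ℤ) :
    (b ≡ 0 [ZMOD (p : ℤ)] →
      ((cyc p p) ^ (-b) * (cyc p p * cyc p q) ^ b * (cyc p q) ^ (-a) = 1 ↔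
        a ≡ 0 [ZMOD (q : ℤ)])) ∧
    (b ≡ 1 [ZMOD (p : ℤ)] →
      ((cyc p p) ^ (-b) * (cyc p p * cyc p q) ^ b * (cyc p q) ^ (-a) = 1 ↔
        a ≡ 1 [ZMOD (q : ℤ)])) := by
  set P := cyc p p
  set Q := cyc p q
  have hP : orderOf P = p := orderOf_cyc (by omega) le_rfl
  have hPQ : orderOf (P * Q) = p :=
    orderOf_cyc_mul_cyc (hq.odd_of_ne_two (by omega)) hqp.le (by omega)
  have hprefix (c : ℤ) (hbc : b ≡ c [ZMOD p]) :
      P ^ (-b) * (P * Q) ^ b = P ^ (-c) * (P * Q) ^ c := by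
    rw [(zpow_eq_zpow_iff_modEq (x := P)).mpr (hP ▸ hbc.neg),
      (zpow_eq_zpow_iff_modEq (x := P * Q)).mpr (hPQ ▸ hbc)]
  have hQ (c : ℤ) : Q ^ c = 1 ↔ (q : ℤ) ∣ c := by
    rw [← orderOf_cyc (by omega) hqp.le, orderOf_dvd_iff_zpow_eq_one]
  constructor
  · intro hb
    rw [hprefix 0 hb, neg_zero, zpow_zero, zpow_zero, one_mul, one_mul, hQ, dvd_neg,
      Int.modEq_zero_iff_dvd]
  · intro hb
    rw [hprefix 1 hb, zpow_neg_one, zpow_one, inv_mul_cancel_left, ← zpow_one_add, hQ,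
      Int.modEq_iff_dvd, sub_eq_add_neg]

/-- Let `p, q` be primes with `2 < q < p` and `a, b ∈ ℤ`. Consider
the element `E = [q]^{−a}([q][p])^{b}[p]^{−b}` of `S_p` (products taken left to
right, so a paper product `x y` is `y * x` in Mathlib's convention
`(f * g) x = f (g x)`; in particular the paper's `[q][p]` is `cyc p p * cyc p q`).
(i) If `b ≡ 0 (mod p)` then `E = 1` if and only if `a ≡ 0 (mod q)`.
(ii) If `b ≡ 1 (mod p)` then `E = 1` if and only if `a ≡ 1 (mod q)`. -/
theorem cyc_identity_iff_modEq (p q : ℕ) (hp : p.Prime) (hq : q.Prime) (h2q : 2 < q)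
    (hqp : q < p) (a b : ℤ) :
    (b ≡ 0 [ZMOD (p : ℤ)] →
      ((cyc p p) ^ (-b) * (cyc p p * cyc p q) ^ b * (cyc p q) ^ (-a) = 1 ↔
        a ≡ 0 [ZMOD (q : ℤ)])) ∧
    (b ≡ 1 [ZMOD (p : ℤ)] →
      ((cyc p p) ^ (-b) * (cyc p p * cyc p q) ^ b * (cyc p q) ^ (-a) = 1 ↔
        a ≡ 1 [ZMOD (q : ℤ)])) :=
  cyc_identity_iff_modEq_general p q hq h2q hqp a b
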